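/- Let C be a non-degenerate [n,2,d] rank metric code over F_{q^m}/F_q with d < n ≤ m, generator matrix G and associated q-system X ⊆ F_{q^m}². Then C is an antipodal two-weight rank metric code if and only if for every 1-dimensional F_{q^m}-subspace H of F_{q^m}², the F_q-dimension of X ∩ H is either 0 or n − d (i.e. the Desarguesian m-spread of F_{q^m}² induces an (n−d)-spread on X). -/

import Mathlib

open Module Submodule

/-- The rank (over the base field `K`) of a vector `c ∈ L^n`. -/
noncomputable def rankWeight (K : Type*) [Field K] {L : Type*} [Field L] [Algebra K L]
    {n : ℕ} (c : Fin n → L) : ℕ :=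
  Module.finrank K (Submodule.span K (Set.range c))

section Aux

variable {L : Type*} [Field L]

/-- The linear functional `v ↦ u 0 * v 0 + u 1 * v 1` on `L²`. -/
noncomputable def phiAux (u : Fin 2 → L) : (Fin 2 → L) →ₗ[L] L :=
  u 0 • LinearMap.proj 0 + u 1 • LinearMap.proj 1

@[simp] lemma phiAux_apply (u v : Fin 2 → L) :
    phiAux u v = u 0 * v 0 + u 1 * v 1 := by
  simp [phiAux, smul_eq_mul]

lemma finrank_ker_phiAux (u : Fin 2 → L) (hu : u ≠ 0) :
    finrank L (LinearMap.ker (phiAux u)) = 1 := by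
  have hsurj : Function.Surjective (phiAux u) := by
    obtain ⟨w, hw⟩ : ∃ w, phiAux u w ≠ 0 := by
      obtain ⟨i, hi⟩ : ∃ i, u i ≠ 0 := by
        by_contra h
        push_neg at h
        exact hu (funext h)
      refine ⟨Pi.single i 1, ?_⟩
      fin_cases i <;> simpa using hi
    intro b
    refine ⟨(b * (phiAux u w)⁻¹) • w, ?_⟩
    rw [map_smul, smul_eq_mul, mul_assoc, inv_mul_cancel₀ hw, mul_one]
  have h1 := LinearMap.finrank_range_add_finrank_ker (phiAux u)
  rw [LinearMap.range_eq_top.mpr hsurj] at h1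
  simp only [finrank_top, finrank_self] at h1
  have h2 : finrank L (Fin 2 → L) = 2 := by simp
  omega

end Aux

/-- A non-degenerate `[n,2,d]` rank metric code `C` over `F_{q^m}/F_q`
with `d < n ≤ m`, generator matrix `G` and `q`-system `X ⊆ F_{q^m}²` is antipodal two-weight
if and only if every `1`-dimensional `F_{q^m}`-subspace `H` of `F_{q^m}²` meets `X` in an
`F_q`-subspace of dimension `0` or `n - d` (i.e. the Desarguesian `m`-spread of `F_{q^m}²`
induces an `(n-d)`-spread on `X`). -/
theorem atw_iff_desarguesian_induces_spread
    {K L : Type*} [Field K] [Fintype K] [Field L] [Algebra K L]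
    {n d m : ℕ} (hm : Module.finrank K L = m) (hdn : d < n) (hnm : n ≤ m)
    (C : Submodule L (Fin n → L)) (hdim : Module.finrank L C = 2)
    (G : Matrix (Fin 2) (Fin n) L)
    (hG : C = Submodule.span L (Set.range fun i => G i))
    (hnondeg : ∀ a : Fin n → K, a ≠ 0 → ∃ c ∈ C, ∑ i, c i * algebraMap K L (a i) ≠ 0)
    (hmin : ∀ c ∈ C, c ≠ 0 → d ≤ rankWeight K c)
    (hdex : ∃ c ∈ C, c ≠ 0 ∧ rankWeight K c = d)
    (X : Submodule K (Fin 2 → L))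
    (hX : X = Submodule.span K (Set.range fun j => fun i => G i j)) :
    ((∀ c ∈ C, c ≠ 0 → rankWeight K c = d ∨ rankWeight K c = n) ∧
        (∃ c ∈ C, rankWeight K c = n)) ↔
      (∀ H : Submodule L (Fin 2 → L), Module.finrank L H = 1 →
        Module.finrank K ↥(X ⊓ H.restrictScalars K) = 0 ∨
        Module.finrank K ↥(X ⊓ H.restrictScalars K) = n - d) := by
  classical
  -- `L` is a finite-dimensional `K`-vector space
  haveI : FiniteDimensional K L := Module.finite_of_finrank_pos (by omega : 0 < finrank K L)
  haveI : Finite L := Module.finite_of_finite K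
  -- the rows of `G` are linearly independent
  have hG2li : LinearIndependent L (fun i => G i) := by
    rw [linearIndependent_iff_card_eq_finrank_span]
    rw [Set.finrank, ← hG, hdim]
    simp
  have hrow : ∀ u : Fin 2 → L, ∑ i, u i • G i = 0 → u = 0 := by
    intro u hu
    have := Fintype.linearIndependent_iff.mp hG2li u hu
    funext i
    exact this i
  -- the columns of `G` are `K`-linearly independent, hence `finrank K X = n`
  have hcolli : LinearIndependent K (fun j : Fin n => fun i => G i j) := by
    rw [Fintype.linearIndependent_iff]
    intro g hg
    by_contra hgne
    push_neg at hgne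
    obtain ⟨j0, hj0⟩ := hgne
    have hgnz : g ≠ 0 := fun h => hj0 (by rw [h]; rfl)
    obtain ⟨c, hcC, hcne⟩ := hnondeg g hgnz
    apply hcne
    rw [hG, mem_span_range_iff_exists_fun] at hcC
    obtain ⟨u, hu⟩ := hcC
    have hrowzero : ∀ i : Fin 2, ∑ j, G i j * algebraMap K L (g j) = 0 := by
      intro i
      have h := congrFun hg i
      simpa [Finset.sum_apply, Algebra.smul_def, mul_comm] using h
    have hc : ∀ j, c j = ∑ i, u i * G i j := by
      intro j
      rw [← hu]
      simp [Finset.sum_apply]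
    calc ∑ j, c j * algebraMap K L (g j)
        = ∑ j, ∑ i, u i * (G i j * algebraMap K L (g j)) := by
          refine Finset.sum_congr rfl fun j _ => ?_
          rw [hc j, Finset.sum_mul]
          exact Finset.sum_congr rfl fun i _ => mul_assoc _ _ _
      _ = ∑ i, u i * ∑ j, G i j * algebraMap K L (g j) := by
          rw [Finset.sum_comm]
          exact Finset.sum_congr rfl fun i _ => (Finset.mul_sum _ _ _).symm
      _ = 0 := by simp [hrowzero]
  have hXn : finrank K X = n := by
    rw [hX, finrank_span_eq_card hcolli]
    simp
  -- the codewords coming from `u ∈ L²`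
  have hcwC : ∀ u : Fin 2 → L, (fun j => phiAux u fun i => G i j) ∈ C := by
    intro u
    rw [hG, mem_span_range_iff_exists_fun]
    refine ⟨u, ?_⟩
    funext j
    simp [Finset.sum_apply, Fin.sum_univ_two]
  have hcw0 : ∀ u : Fin 2 → L, (fun j => phiAux u fun i => G i j) = (0 : Fin n → L) → u = 0 := by
    intro u h
    apply hrow
    funext j
    have h' := congrFun h j
    simp only [phiAux_apply] at h'
    simp [Finset.sum_apply, Fin.sum_univ_two, h']
  have hmem : ∀ c ∈ C, ∃ u : Fin 2 → L, c = fun j => phiAux u fun i => G i j := by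
    intro c hc
    rw [hG, mem_span_range_iff_exists_fun] at hc
    obtain ⟨u, hu⟩ := hc
    refine ⟨u, ?_⟩
    funext j
    rw [← hu]
    simp [Finset.sum_apply, Fin.sum_univ_two]
  -- the key rank formula
  have hkey : ∀ u : Fin 2 → L,
      rankWeight K (fun j => phiAux u fun i => G i j) +
        finrank K ↥(X ⊓ (LinearMap.ker (phiAux u)).restrictScalars K) = n := by
    intro u
    set ψ : (Fin 2 → L) →ₗ[K] L := (phiAux u).restrictScalars K with hψ
    have hspan : Submodule.span K (Set.range fun j => phiAux u fun i => G i j) = X.map ψ := by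
      rw [hX, Submodule.map_span]
      congr 1
      rw [← Set.range_comp]
      rfl
    have hrn := LinearMap.finrank_range_add_finrank_ker (ψ.domRestrict X)
    rw [LinearMap.range_domRestrict, LinearMap.ker_domRestrict] at hrn
    have hker : (LinearMap.ker ψ).comap X.subtype
        = (X ⊓ LinearMap.ker ψ).comap X.subtype := by
      rw [Submodule.comap_inf, Submodule.comap_subtype_self, top_inf_eq]
    rw [hker] at hrn
    have heq : finrank K ↥((X ⊓ LinearMap.ker ψ).comap X.subtype)
        = finrank K ↥(X ⊓ LinearMap.ker ψ) :=
      LinearEquiv.finrank_eq (Submodule.comapSubtypeEquivOfLe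
        (inf_le_left : X ⊓ LinearMap.ker ψ ≤ X))
    rw [heq] at hrn
    rw [hXn] at hrn
    have hkerψ : LinearMap.ker ψ = (LinearMap.ker (phiAux u)).restrictScalars K := by
      ext x
      simp [hψ, LinearMap.mem_ker]
    rw [hkerψ] at hrn
    unfold rankWeight
    rw [hspan]
    exact hrn
  -- every `1`-dimensional `L`-subspace is the kernel of some `phiAux u`
  have hHrep : ∀ H : Submodule L (Fin 2 → L), finrank L H = 1 →
      ∃ u : Fin 2 → L, u ≠ 0 ∧ LinearMap.ker (phiAux u) = H := by
    intro H hH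
    have hHne : H ≠ ⊥ := by
      intro h
      rw [h, finrank_bot] at hH
      omega
    obtain ⟨v, hvH, hv0⟩ := (Submodule.ne_bot_iff H).mp hHne
    set u : Fin 2 → L := ![v 1, -(v 0)] with hu_def
    have hu : u ≠ 0 := by
      intro h
      apply hv0
      funext i
      have h0 := congrFun h 0
      have h1 := congrFun h 1
      simp [hu_def] at h0 h1
      fin_cases i <;> simp [h0, h1]
    refine ⟨u, hu, ?_⟩
    have hvk : v ∈ LinearMap.ker (phiAux u) := by
      simp only [LinearMap.mem_ker, phiAux_apply, hu_def]
      simp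
      ring
    have h1 : finrank L ↥(Submodule.span L {v}) = 1 := finrank_span_singleton hv0
    have e1 : Submodule.span L {v} = LinearMap.ker (phiAux u) :=
      Submodule.eq_of_le_of_finrank_eq
        ((Submodule.span_singleton_le_iff_mem v _).mpr hvk)
        (by rw [h1, finrank_ker_phiAux u hu])
    have e2 : Submodule.span L {v} = H :=
      Submodule.eq_of_le_of_finrank_eq
        ((Submodule.span_singleton_le_iff_mem v _).mpr hvH) (by rw [h1, hH])
    rw [← e1, e2]
  constructor
  · -- ATW → spread
    rintro ⟨hATW, -⟩ H hH1
    obtain ⟨u, hu, hker⟩ := hHrep H hH1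
    have hc := hkey u
    rw [hker] at hc
    have hcne : (fun j => phiAux u fun i => G i j) ≠ (0 : Fin n → L) :=
      fun h => hu (hcw0 u h)
    rcases hATW _ (hcwC u) hcne with h | h
    · right; omega
    · left; omega
  · -- spread → ATW
    intro hsp
    constructor
    · intro c hcC hcne
      obtain ⟨u, rfl⟩ := hmem c hcC
      have hu : u ≠ 0 := fun h => hcne (by rw [h]; funext j; simp)
      have hH1 := finrank_ker_phiAux u hu
      have hc := hkey u
      rcases hsp _ hH1 with h | h
      · right; omega
      · left; omega
    · -- existence of a full-rank codeword
      by_contra hne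
      push_neg at hne
      -- every line `span {![1, t]}` meets `X` in dimension `n - d`
      have hline : ∀ t : L,
          finrank K ↥(X ⊓ (Submodule.span L {(![1, t] : Fin 2 → L)}).restrictScalars K)
            = n - d := by
        intro t
        have hv0 : (![1, t] : Fin 2 → L) ≠ 0 := by
          intro h
          have := congrFun h 0
          simp at this
        have hH1 : finrank L ↥(Submodule.span L {(![1, t] : Fin 2 → L)}) = 1 :=
          finrank_span_singleton hv0
        rcases hsp _ hH1 with h | h
        · exfalso
          set u : Fin 2 → L := ![t, -1] with hu_def
          have hu : u ≠ 0 := by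
            intro hc
            have := congrFun hc 1
            simp [hu_def] at this
          have hker : LinearMap.ker (phiAux u) = Submodule.span L {(![1, t] : Fin 2 → L)} := by
            symm
            apply Submodule.eq_of_le_of_finrank_eq
            · rw [Submodule.span_singleton_le_iff_mem]
              simp only [LinearMap.mem_ker, phiAux_apply, hu_def]
              simp
            · rw [hH1, finrank_ker_phiAux u hu]
          have hc := hkey u
          rw [hker, h] at hc
          exact hne _ (hcwC u) (by omega)
        · exact h
      -- counting argument
      letI : Fintype L := Fintype.ofFinite L
      have hq2 : 2 ≤ Fintype.card K := Fintype.one_lt_card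
      have hcardL : Fintype.card L = Fintype.card K ^ m := by
        rw [card_eq_pow_finrank (K := K), hm]
      have hScard : ∀ S : Submodule K (Fin 2 → L),
          (S : Set (Fin 2 → L)).ncard = Fintype.card K ^ finrank K ↥S := by
        intro S
        letI : Fintype ↥S := Fintype.ofFinite ↥S
        rw [← Nat.card_coe_set_eq, SetLike.coe_sort_coe, Nat.card_eq_fintype_card,
          card_eq_pow_finrank (K := K)]
      set s : L → Set (Fin 2 → L) := fun t =>
        ((X ⊓ (Submodule.span L {(![1, t] : Fin 2 → L)}).restrictScalars K :
          Submodule K (Fin 2 → L)) : Set (Fin 2 → L)) \ {0} with hs_def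
      have hscard : ∀ t, (s t).ncard = Fintype.card K ^ (n - d) - 1 := by
        intro t
        rw [hs_def]
        simp only
        rw [Set.ncard_diff_singleton_of_mem (Submodule.zero_mem _),
          hScard, hline t]
      have hdisjoint : ∀ t₁ t₂ : L, t₁ ≠ t₂ → Disjoint (s t₁) (s t₂) := by
        intro t₁ t₂ hne12
        rw [Set.disjoint_left]
        rintro x hx1 hx2
        have hx0 : x ≠ 0 := hx1.2
        have h1 := (Submodule.mem_inf.mp hx1.1).2
        have h2 := (Submodule.mem_inf.mp hx2.1).2
        rw [Submodule.restrictScalars_mem, Submodule.mem_span_singleton] at h1 h2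
        obtain ⟨a, ha⟩ := h1
        obtain ⟨b, hb⟩ := h2
        have ha0 : x 0 = a := by rw [← ha]; simp
        have hb0 : x 0 = b := by rw [← hb]; simp
        have ha1 : x 1 = a * t₁ := by rw [← ha]; simp
        have hb1 : x 1 = b * t₂ := by rw [← hb]; simp
        have hane : a ≠ 0 := by
          rintro rfl
          rw [← ha] at hx0
          simp at hx0
        apply hne12
        have hab : a = b := by rw [← ha0, hb0]
        have : a * t₁ = a * t₂ := by rw [← ha1, hb1, hab]
        exact mul_left_cancel₀ hane this
      set A : L → Finset (Fin 2 → L) := fun t => (Set.toFinite (s t)).toFinset with hA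
      have hAcard : ∀ t, (A t).card = Fintype.card K ^ (n - d) - 1 := by
        intro t
        rw [hA]
        rw [← Set.ncard_eq_toFinset_card (s t) (Set.toFinite (s t))]
        exact hscard t
      have hXcard : ((X : Set (Fin 2 → L)) \ {0}).ncard = Fintype.card K ^ n - 1 := by
        rw [Set.ncard_diff_singleton_of_mem (Submodule.zero_mem X),
          hScard, hXn]
      have hsum : ∑ t : L, (A t).card
          ≤ ((Set.toFinite ((X : Set (Fin 2 → L)) \ {0})).toFinset).card := by
        rw [← Finset.card_biUnion (fun t₁ _ t₂ _ h =>
          Set.Finite.disjoint_toFinset.mpr (hdisjoint t₁ t₂ h))]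
        apply Finset.card_le_card
        intro x hx
        rw [Finset.mem_biUnion] at hx
        obtain ⟨t, -, hxt⟩ := hx
        rw [Set.Finite.mem_toFinset] at hxt ⊢
        exact ⟨(Submodule.mem_inf.mp hxt.1).1, hxt.2⟩
      have hfinal : Fintype.card K ^ m * (Fintype.card K ^ (n - d) - 1)
          ≤ Fintype.card K ^ n - 1 := by
        calc Fintype.card K ^ m * (Fintype.card K ^ (n - d) - 1)
            = ∑ t : L, (A t).card := by
              rw [Finset.sum_congr rfl (fun t _ => hAcard t), Finset.sum_const,
                Finset.card_univ, hcardL, smul_eq_mul]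
          _ ≤ _ := hsum
          _ = Fintype.card K ^ n - 1 := by
              rw [← Set.ncard_eq_toFinset_card _ (Set.toFinite _), hXcard]
      -- arithmetic contradiction
      set q := Fintype.card K with hq
      have e1 : q ^ (n - d) = q * q ^ (n - d - 1) := by
        rw [← pow_succ']
        congr 1
        omega
      have hp1 : 1 ≤ q ^ (n - d - 1) := Nat.one_le_pow _ _ (by omega)
      have h2 : q ^ (n - d - 1) ≤ q ^ (n - d) - 1 := by
        have h2' : 2 * q ^ (n - d - 1) ≤ q * q ^ (n - d - 1) :=
          Nat.mul_le_mul_right _ hq2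
        omega
      have h3 : q ^ n ≤ q ^ m * q ^ (n - d - 1) := by
        rw [← pow_add]
        exact Nat.pow_le_pow_right (by omega) (by omega)
      have h4 : 1 ≤ q ^ n := Nat.one_le_pow _ _ (by omega)
      have h5 : q ^ m * q ^ (n - d - 1) ≤ q ^ m * (q ^ (n - d) - 1) :=
        Nat.mul_le_mul_left _ h2
      omega
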